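/- arXiv:1409.6853 — 2 statements merged into one kernel-verified Lean document; each statement's English description precedes it below -/
import Mathlib

section
/- (Estimate (hpm2) of Section 5.3 of the paper.) Let d ≥ 1 and let k ≥ 1 be an integer. Define the entire function F(ζ) := exp(−(ζ₁² + ⋯ + ζ_d²)^k) for ζ = (ζ₁,…,ζ_d) ∈ ℂ^d. Then there exists a constant C > 0 (depending only on d and k) such that |F(ζ)| ≤ exp(−(1/2)|Re ζ|^{2k} + C|Im ζ|^{2k}) for all ζ ∈ ℂ^d. -/
/-!
Write `z = ∑ ζⱼ²`, `r = |Re ζ|`, `s = |Im ζ|`. Then `Re z = r² - s²` and, by Cauchy–Schwarz,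
`|Im z| ≤ 2rs`, so `z` lies within `2s(r + s)` of the positive real `r²` and `|z| ≤ (r + s)²`.
Telescoping `z^k - r^{2k}` gives `|z^k - r^{2k}| ≤ 2k s (r + s)^{2k-1}`, and splitting into the
cases `r ≤ Ks` and `r > Ks` for a large `K` bounds this by `r^{2k}/2 + C s^{2k}`. Hence
`Re z^k ≥ r^{2k}/2 - C s^{2k}`.
-/

open Finset

theorem norm_pow_succ_sub_pow_succ_le {R : Type*} [SeminormedRing R] {w v : R} {M : ℝ}
    (hw : ‖w‖ ≤ M) (hv : ‖v‖ ≤ M) (n : ℕ) :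
    ‖w ^ (n + 1) - v ^ (n + 1)‖ ≤ (n + 1) * ‖w - v‖ * M ^ n := by
  induction n with
  | zero => simp
  | succ n ih =>
    have hM : 0 ≤ M := (norm_nonneg _).trans hw
    have hwn : ‖w ^ (n + 1)‖ ≤ M ^ (n + 1) :=
      (norm_pow_le' w n.succ_pos).trans (pow_le_pow_left₀ (norm_nonneg _) hw _)
    calc ‖w ^ (n + 2) - v ^ (n + 2)‖
        = ‖w ^ (n + 1) * (w - v) + (w ^ (n + 1) - v ^ (n + 1)) * v‖ := by congr 1; noncomm_ring
      _ ≤ ‖w ^ (n + 1)‖ * ‖w - v‖ + ‖w ^ (n + 1) - v ^ (n + 1)‖ * ‖v‖ :=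
        (norm_add_le _ _).trans (add_le_add (norm_mul_le _ _) (norm_mul_le _ _))
      _ ≤ M ^ (n + 1) * ‖w - v‖ + ((n + 1) * ‖w - v‖ * M ^ n) * M := by gcongr
      _ = ((n + 1 : ℕ) + 1) * ‖w - v‖ * M ^ (n + 1) := by push_cast; ring

theorem exists_mul_mul_add_pow_le {A : ℝ} (hA : 0 ≤ A) (n : ℕ) :
    ∃ C > 0, ∀ r s : ℝ, 0 ≤ r → 0 ≤ s →
      A * s * (r + s) ^ n ≤ r ^ (n + 1) / 2 + C * s ^ (n + 1) := by
  set K : ℝ := 2 ^ (n + 1) * (A + 1)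
  have hK : 1 ≤ K := one_le_mul_of_one_le_of_one_le (one_le_pow₀ one_le_two) (by linarith)
  refine ⟨A * (K + 1) ^ n + 1, by positivity, fun r s hr hs => ?_⟩
  rcases le_or_gt r (K * s) with hr_le | hr_gt
  · calc A * s * (r + s) ^ n ≤ A * s * ((K + 1) * s) ^ n := by gcongr; linarith
      _ = A * (K + 1) ^ n * s ^ (n + 1) := by rw [mul_pow]; ring
      _ ≤ _ := le_add_of_nonneg_of_le (by positivity) (by gcongr; linarith)
  · have hA2 : A / (2 * (A + 1)) ≤ 1 / 2 := by rw [div_le_iff₀ (by positivity)]; linarith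
    have hsK : s ≤ r / K := by rw [le_div_iff₀ (by positivity)]; linarith
    have hsr : s ≤ r := hsK.trans (div_le_self hr hK)
    have hCs : 0 ≤ (A * (K + 1) ^ n + 1) * s ^ (n + 1) := by positivity
    calc A * s * (r + s) ^ n ≤ A * (r / K) * (2 * r) ^ n := by gcongr; linarith
      _ = A / (2 * (A + 1)) * r ^ (n + 1) := by simp only [K]; field_simp; ring
      _ ≤ 1 / 2 * r ^ (n + 1) := mul_le_mul_of_nonneg_right hA2 (by positivity)
      _ ≤ _ := by linarith

section SumOfSquares

variable {ι : Type*} [Fintype ι] (ζ : ι → ℂ)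

noncomputable def normRe : ℝ := √(∑ j, (ζ j).re ^ 2)

noncomputable def normIm : ℝ := √(∑ j, (ζ j).im ^ 2)

theorem normRe_nonneg : 0 ≤ normRe ζ := Real.sqrt_nonneg _

theorem normIm_nonneg : 0 ≤ normIm ζ := Real.sqrt_nonneg _

theorem re_sum_sq : (∑ j, ζ j ^ 2).re = normRe ζ ^ 2 - normIm ζ ^ 2 := by
  rw [normRe, normIm, Real.sq_sqrt (by positivity), Real.sq_sqrt (by positivity),
    Complex.re_sum, ← sum_sub_distrib]
  simp only [sq, Complex.mul_re]

theorem abs_im_sum_sq_le : |(∑ j, ζ j ^ 2).im| ≤ 2 * (normRe ζ * normIm ζ) := by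
  have him : (∑ j, ζ j ^ 2).im = 2 * ∑ j, (ζ j).re * (ζ j).im := by
    rw [Complex.im_sum, mul_sum]
    simp only [sq, Complex.mul_im]
    ring_nf
  have hcs := Real.sum_mul_le_sqrt_mul_sqrt univ (fun j => (ζ j).re) (fun j => (ζ j).im)
  have hcs' := Real.sum_mul_le_sqrt_mul_sqrt univ (fun j => -(ζ j).re) (fun j => (ζ j).im)
  simp only [neg_mul, sum_neg_distrib, neg_sq] at hcs'
  rw [him, abs_mul, abs_two, normRe, normIm]
  exact mul_le_mul_of_nonneg_left (abs_le.mpr ⟨by linarith, hcs⟩) zero_le_two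

theorem norm_sum_sq_le : ‖∑ j, ζ j ^ 2‖ ≤ (normRe ζ + normIm ζ) ^ 2 := by
  have hre : |(∑ j, ζ j ^ 2).re| ≤ normRe ζ ^ 2 + normIm ζ ^ 2 := by
    rw [re_sum_sq, abs_le]
    constructor <;> nlinarith [sq_nonneg (normRe ζ), sq_nonneg (normIm ζ)]
  calc ‖∑ j, ζ j ^ 2‖ ≤ |(∑ j, ζ j ^ 2).re| + |(∑ j, ζ j ^ 2).im| :=
        Complex.norm_le_abs_re_add_abs_im _
    _ ≤ normRe ζ ^ 2 + normIm ζ ^ 2 + 2 * (normRe ζ * normIm ζ) :=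
        add_le_add hre (abs_im_sum_sq_le ζ)
    _ = _ := by ring

theorem norm_sum_sq_sub_le :
    ‖∑ j, ζ j ^ 2 - (normRe ζ : ℂ) ^ 2‖ ≤ 2 * normIm ζ * (normRe ζ + normIm ζ) := by
  have hre : (∑ j, ζ j ^ 2 - (normRe ζ : ℂ) ^ 2).re = -normIm ζ ^ 2 := by
    rw [Complex.sub_re, re_sum_sq, ← Complex.ofReal_pow, Complex.ofReal_re]; ring
  have him : (∑ j, ζ j ^ 2 - (normRe ζ : ℂ) ^ 2).im = (∑ j, ζ j ^ 2).im := by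
    rw [Complex.sub_im, ← Complex.ofReal_pow, Complex.ofReal_im, sub_zero]
  calc ‖∑ j, ζ j ^ 2 - (normRe ζ : ℂ) ^ 2‖
      ≤ |(∑ j, ζ j ^ 2 - (normRe ζ : ℂ) ^ 2).re| + |(∑ j, ζ j ^ 2 - (normRe ζ : ℂ) ^ 2).im| :=
        Complex.norm_le_abs_re_add_abs_im _
    _ ≤ normIm ζ ^ 2 + 2 * (normRe ζ * normIm ζ) := by
        rw [hre, him, abs_neg, abs_sq]
        exact add_le_add_right (abs_im_sum_sq_le ζ) _
    _ ≤ _ := by nlinarith [normRe_nonneg ζ, normIm_nonneg ζ]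

theorem norm_sum_sq_pow_sub_le (n : ℕ) :
    ‖(∑ j, ζ j ^ 2) ^ (n + 1) - (normRe ζ : ℂ) ^ (2 * (n + 1))‖ ≤
      2 * (n + 1) * normIm ζ * (normRe ζ + normIm ζ) ^ (2 * n + 1) := by
  have hr : ‖(normRe ζ : ℂ) ^ 2‖ ≤ (normRe ζ + normIm ζ) ^ 2 := by
    rw [norm_pow, Complex.norm_real, Real.norm_of_nonneg (normRe_nonneg ζ)]
    gcongr
    · exact normRe_nonneg ζ
    · linarith [normIm_nonneg ζ]
  calc ‖(∑ j, ζ j ^ 2) ^ (n + 1) - (normRe ζ : ℂ) ^ (2 * (n + 1))‖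
      ≤ (n + 1) * ‖∑ j, ζ j ^ 2 - (normRe ζ : ℂ) ^ 2‖ * ((normRe ζ + normIm ζ) ^ 2) ^ n := by
        rw [pow_mul]
        exact norm_pow_succ_sub_pow_succ_le (norm_sum_sq_le ζ) hr n
    _ ≤ (n + 1) * (2 * normIm ζ * (normRe ζ + normIm ζ)) * ((normRe ζ + normIm ζ) ^ 2) ^ n := by
        gcongr
        exact norm_sum_sq_sub_le ζ
    _ = _ := by rw [← pow_mul]; ring

end SumOfSquares

theorem statement17_general (d k : ℕ) (hk : 1 ≤ k) :
    ∃ C > (0 : ℝ), ∀ ζ : Fin d → ℂ,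
      ‖Complex.exp (-(∑ j, ζ j ^ 2) ^ k)‖ ≤
        Real.exp (-(1 / 2) * Real.sqrt (∑ j, (ζ j).re ^ 2) ^ (2 * k) +
          C * Real.sqrt (∑ j, (ζ j).im ^ 2) ^ (2 * k)) := by
  obtain ⟨n, rfl⟩ : ∃ n, k = n + 1 := ⟨k - 1, by omega⟩
  obtain ⟨C, hC, hbound⟩ :=
    exists_mul_mul_add_pow_le (A := 2 * (n + 1)) (by positivity) (2 * n + 1)
  refine ⟨C, hC, fun ζ => ?_⟩
  have hre : normRe ζ ^ (2 * (n + 1)) - ((∑ j, ζ j ^ 2) ^ (n + 1)).re ≤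
      2 * (n + 1) * normIm ζ * (normRe ζ + normIm ζ) ^ (2 * n + 1) := by
    refine le_trans ?_ ((norm_sub_rev _ _).trans_le (norm_sum_sq_pow_sub_le ζ n))
    simpa [← Complex.ofReal_pow] using Complex.re_le_norm ((normRe ζ : ℂ) ^ (2 * (n + 1)) -
      (∑ j, ζ j ^ 2) ^ (n + 1))
  have hscalar := hbound (normRe ζ) (normIm ζ) (normRe_nonneg ζ) (normIm_nonneg ζ)
  rw [show 2 * n + 1 + 1 = 2 * (n + 1) by ring] at hscalar
  rw [Complex.norm_exp, Real.exp_le_exp, Complex.neg_re]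
  change _ ≤ -(1 / 2) * normRe ζ ^ _ + C * normIm ζ ^ _
  linarith

/-- estimate (hpm2) of Section 5.3: the entire function
`F(ζ) = exp(-(ζ₁² + ⋯ + ζ_d²)^k)` satisfies
`|F(ζ)| ≤ exp(-(1/2)|Re ζ|^{2k} + C|Im ζ|^{2k})` on `ℂ^d`, for some `C > 0` depending only
on `d` and `k`, where `|Re ζ|` and `|Im ζ|` are the Euclidean norms of the componentwise
real and imaginary parts. -/
theorem statement17 (d k : ℕ) (hd : 1 ≤ d) (hk : 1 ≤ k) :
    ∃ C > (0 : ℝ), ∀ ζ : Fin d → ℂ,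
      ‖Complex.exp (-(∑ j, ζ j ^ 2) ^ k)‖ ≤
        Real.exp (-(1 / 2) * Real.sqrt (∑ j, (ζ j).re ^ 2) ^ (2 * k) +
          C * Real.sqrt (∑ j, (ζ j).im ^ 2) ^ (2 * k)) :=
  statement17_general d k hk
end

section
/- (Pointwise Gevrey-type bound from the Cauchy estimates, Section 5.3 of the paper.) Let d ≥ 1 and let k ≥ 1 be an integer, and let f(ξ) := exp(−|ξ|^{2k}) on ℝ^d. Then there exists a constant C > 0 such that for every multi-index α ∈ ℕ^d and every ξ ∈ ℝ^d, |∂^α f(ξ)| ≤ C^{|α|+1} (α!)^{1 − 1/(2k)} exp(−(1/2)((|ξ| − R_α)₊)^{2k}), where R_α := (1+|α|)^{1/(2k)} and (·)₊ denotes the positive part. -/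
open MeasureTheory

noncomputable section

/-- `ℝ^d` with the Euclidean structure. -/
abbrev Ed (d : ℕ) := EuclideanSpace ℝ (Fin d)

/-- The partial derivative `∂_i g` of a function `g : ℝ^d → ℝ`. -/
def pderiv (d : ℕ) (i : Fin d) (g : Ed d → ℝ) : Ed d → ℝ :=
  fun x => fderiv ℝ g x (EuclideanSpace.single i 1)

/-- The iterated partial derivative `∂^α g = ∂₁^{α₁} ⋯ ∂_d^{α_d} g` for a multi-index
`α ∈ ℕ^d`. -/
def multiDeriv (d : ℕ) (α : Fin d → ℕ) (g : Ed d → ℝ) : Ed d → ℝ :=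
  (List.finRange d).foldr (fun i h => (pderiv d i)^[α i] h) g

/-!
`f` is the restriction to `ℝ^d` of the entire function `F(z) = exp(-(∑ z_j²)^k)`. On the
polydisc of radius `ρ` around a real point `ξ` one has
`Re (∑ w_j²)^k ≥ |ξ|^{2k} / 2 - K ρ^{2k}` with `K` depending only on `d` and `k`, so iterating
the one-variable Cauchy estimate in each coordinate gives
`|∂^α f(ξ)| ≤ α! ρ^{-|α|} exp(K ρ^{2k}) exp(-|ξ|^{2k} / 2)`. For `ρ = R_α` the factor
`exp(K ρ^{2k})` is `(e^K)^{|α|+1}`, and `α! ≤ |α|! ≤ (1+|α|)^{|α|} = ρ^{2k|α|}` turns `α! ρ^{-|α|}`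
into at most `(α!)^{1-1/(2k)}`.
-/

open Nat

theorem norm_add_pow_sub_pow_le {R : Type*} [NormedRing R] [NormOneClass R] (a b : R) (k : ℕ) :
    ‖(a + b) ^ k - a ^ k‖ ≤ (‖a‖ + ‖b‖) ^ k - ‖a‖ ^ k := by
  induction k with
  | zero => simp
  | succ k ih =>
    have hsplit :
        (a + b) ^ (k + 1) - a ^ (k + 1) = (a + b) * ((a + b) ^ k - a ^ k) + b * a ^ k := by
      rw [pow_succ' (a + b), pow_succ' a]; noncomm_ring
    calc ‖(a + b) ^ (k + 1) - a ^ (k + 1)‖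
        ≤ (‖a‖ + ‖b‖) * ((‖a‖ + ‖b‖) ^ k - ‖a‖ ^ k) + ‖b‖ * ‖a‖ ^ k := by
          rw [hsplit]
          refine (norm_add_le _ _).trans (add_le_add ?_ ?_)
          · exact (norm_mul_le _ _).trans
              (mul_le_mul (norm_add_le a b) ih (norm_nonneg _) (by positivity))
          · exact (norm_mul_le _ _).trans
              (mul_le_mul_of_nonneg_left (norm_pow_le a k) (norm_nonneg _))
      _ = (‖a‖ + ‖b‖) ^ (k + 1) - ‖a‖ ^ (k + 1) := by ring

theorem two_mul_pow_sub_add_pow_le_re_pow {u V : ℝ} (hu : 0 ≤ u) {v : ℂ} (hv : ‖v‖ ≤ V) (k : ℕ) :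
    2 * u ^ k - (u + V) ^ k ≤ ((u + v) ^ k).re := by
  have hdiff := (Complex.abs_re_le_norm _).trans (norm_add_pow_sub_pow_le (u : ℂ) v k)
  have hmono : (u + ‖v‖) ^ k ≤ (u + V) ^ k := by gcongr
  rw [Complex.sub_re, Complex.norm_real, Real.norm_of_nonneg hu, ← Complex.ofReal_pow,
    Complex.ofReal_re] at hdiff
  linarith [(abs_le.mp hdiff).1]

theorem add_pow_le_pow_add_pow {a b δ : ℝ} (ha : 0 ≤ a) (hb : 0 ≤ b) (hδ : 0 < δ) (k : ℕ) :
    (a + b) ^ k ≤ ((1 + δ) * a) ^ k + ((1 + δ⁻¹) * b) ^ k := by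
  rcases le_or_gt b (δ * a) with h | h
  · calc (a + b) ^ k ≤ ((1 + δ) * a) ^ k := by gcongr; linarith
      _ ≤ _ := le_add_of_nonneg_right (by positivity)
  · have : a ≤ δ⁻¹ * b := by rw [le_inv_mul_iff₀ hδ]; linarith
    calc (a + b) ^ k ≤ ((1 + δ⁻¹) * b) ^ k := by gcongr; linarith
      _ ≤ _ := le_add_of_nonneg_left (by positivity)

theorem one_add_inv_sq_pow_le {k : ℕ} (hk : 0 < k) : ((1 + (8 * k : ℝ)⁻¹) ^ 2) ^ k ≤ 4 / 3 := by
  have hk' : (0 : ℝ) < k := by exact_mod_cast hk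
  calc ((1 + (8 * k : ℝ)⁻¹) ^ 2) ^ k ≤ (Real.exp (8 * k : ℝ)⁻¹ ^ 2) ^ k := by
        gcongr; linarith [Real.add_one_le_exp (8 * k : ℝ)⁻¹]
    _ = Real.exp (1 / 4) := by
        rw [← pow_mul, ← Real.exp_nat_mul]; congr 1; push_cast; field_simp; ring
    _ ≤ 1 / (1 - 1 / 4) := Real.exp_bound_div_one_sub_of_interval (by norm_num) (by norm_num)
    _ = 4 / 3 := by norm_num

section ComplexCauchy

variable {ι : Type*} [Fintype ι] [DecidableEq ι] {g : (ι → ℂ) → ℂ}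

def cpderiv (i : ι) (g : (ι → ℂ) → ℂ) : (ι → ℂ) → ℂ :=
  fun z => fderiv ℂ g z (Pi.single i 1)

def cmultiDeriv (l : List ι) (α : ι → ℕ) (g : (ι → ℂ) → ℂ) : (ι → ℂ) → ℂ :=
  l.foldr (fun i h => (cpderiv i)^[α i] h) g

theorem contDiff_cpderiv (hg : ContDiff ℂ ⊤ g) (i : ι) : ContDiff ℂ ⊤ (cpderiv i g) :=
  (hg.fderiv_right le_rfl).clm_apply contDiff_const

theorem contDiff_iterate_cpderiv (hg : ContDiff ℂ ⊤ g) (i : ι) (m : ℕ) :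
    ContDiff ℂ ⊤ ((cpderiv i)^[m] g) :=
  Function.Iterate.rec (ContDiff ℂ ⊤) hg (fun _ h => contDiff_cpderiv h i) m

theorem contDiff_cmultiDeriv (hg : ContDiff ℂ ⊤ g) (l : List ι) (α : ι → ℕ) :
    ContDiff ℂ ⊤ (cmultiDeriv l α g) := by
  induction l with
  | nil => exact hg
  | cons i l ih => exact contDiff_iterate_cpderiv ih i (α i)

theorem hasDerivAt_comp_add_smul_single (hg : ContDiff ℂ ⊤ g) (i : ι) (z : ι → ℂ) (t : ℂ) :
    HasDerivAt (fun s : ℂ => g (z + s • Pi.single i 1))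
      (cpderiv i g (z + t • Pi.single i 1)) t := by
  have hline : HasDerivAt (fun s : ℂ => z + s • (Pi.single i 1 : ι → ℂ)) (Pi.single i 1) t := by
    simpa using ((hasDerivAt_id t).smul_const (Pi.single i 1 : ι → ℂ)).const_add z
  exact (hg.differentiable (by simp) _).hasFDerivAt.comp_hasDerivAt t hline

theorem iteratedDeriv_comp_add_smul_single (hg : ContDiff ℂ ⊤ g) (i : ι) (z : ι → ℂ) (m : ℕ) :
    iteratedDeriv m (fun s : ℂ => g (z + s • Pi.single i 1)) =
      fun s => (cpderiv i)^[m] g (z + s • Pi.single i 1) := by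
  induction m generalizing g with
  | zero => rfl
  | succ m ih =>
    have hderiv : deriv (fun s : ℂ => g (z + s • Pi.single i 1)) =
        fun s => cpderiv i g (z + s • Pi.single i 1) :=
      funext fun t => (hasDerivAt_comp_add_smul_single hg i z t).deriv
    rw [iteratedDeriv_succ', hderiv, ih (contDiff_cpderiv hg i)]
    rfl

theorem norm_iterate_cpderiv_le (hg : ContDiff ℂ ⊤ g) (i : ι) (z : ι → ℂ) {ρ M : ℝ}
    (hρ : 0 < ρ) (hM : ∀ t : ℂ, ‖t‖ = ρ → ‖g (z + t • Pi.single i 1)‖ ≤ M) (m : ℕ) :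
    ‖(cpderiv i)^[m] g z‖ ≤ m ! * M / ρ ^ m := by
  have hdiff : Differentiable ℂ fun s : ℂ => g (z + s • Pi.single i 1) :=
    fun t => (hasDerivAt_comp_add_smul_single hg i z t).differentiableAt
  have := Complex.norm_iteratedDeriv_le_of_forall_mem_sphere_norm_le m hρ hdiff.diffContOnCl
    fun t ht => hM t (mem_sphere_zero_iff_norm.mp ht)
  simpa [iteratedDeriv_comp_add_smul_single hg] using this

theorem norm_cmultiDeriv_le (hg : ContDiff ℂ ⊤ g) (α : ι → ℕ) {ρ M : ℝ} (hρ : 0 < ρ)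
    {l : List ι} (hl : l.Nodup) (z : ι → ℂ)
    -- the coordinates outside `l` are frozen, so the hypothesis passes to `l.tail` when the
    -- centre moves along the direction `l.head`
    (hM : ∀ w : ι → ℂ, (∀ j ∈ l, ‖w j - z j‖ ≤ ρ) → (∀ j ∉ l, w j = z j) → ‖g w‖ ≤ M) :
    ‖cmultiDeriv l α g z‖ ≤ (l.map fun i => ((α i)! : ℝ)).prod * M / ρ ^ (l.map α).sum := by
  induction l generalizing z with
  | nil => simpa [cmultiDeriv] using hM z (by simp) (by simp)
  | cons i l ih =>
    obtain ⟨hil, hl⟩ := List.nodup_cons.mp hl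
    have hslice : ∀ t : ℂ, ‖t‖ = ρ → ‖cmultiDeriv l α g (z + t • Pi.single i 1)‖ ≤
        (l.map fun i => ((α i)! : ℝ)).prod * M / ρ ^ (l.map α).sum := by
      intro t ht
      refine ih hl _ fun w hwl hwnl => hM w (fun j hj => ?_) (fun j hj => ?_)
      · rcases List.mem_cons.mp hj with rfl | hj
        · simp [hwnl j hil, ht]
        · simpa [Pi.single_apply, ne_of_mem_of_not_mem hj hil] using hwl j hj
      · rw [List.mem_cons, not_or] at hj
        simpa [Pi.single_apply, hj.1] using hwnl j hj.2
    calc ‖cmultiDeriv (i :: l) α g z‖ = ‖(cpderiv i)^[α i] (cmultiDeriv l α g) z‖ := rfl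
      _ ≤ (α i)! * ((l.map fun i => ((α i)! : ℝ)).prod * M / ρ ^ (l.map α).sum) / ρ ^ α i :=
        norm_iterate_cpderiv_le (contDiff_cmultiDeriv hg l α) i z hρ hslice (α i)
      _ = _ := by
        simp only [List.map_cons, List.prod_cons, List.sum_cons, pow_add]; field_simp

end ComplexCauchy

section RealRestriction

variable {d : ℕ} {g : (Fin d → ℂ) → ℂ}

def realToComplex (d : ℕ) : Ed d →L[ℝ] (Fin d → ℂ) :=
  ContinuousLinearMap.pi fun i => Complex.ofRealCLM.comp (EuclideanSpace.proj i)

@[simp]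
theorem realToComplex_apply (x : Ed d) (i : Fin d) : realToComplex d x i = x i := rfl

theorem realToComplex_single (i : Fin d) :
    realToComplex d (EuclideanSpace.single i 1) = Pi.single i 1 := by
  ext j
  rcases eq_or_ne j i with rfl | h <;> simp [*]

theorem pderiv_re_comp (hg : ContDiff ℂ ⊤ g) (i : Fin d) :
    pderiv d i (fun x => (g (realToComplex d x)).re) =
      fun x => (cpderiv i g (realToComplex d x)).re := by
  funext x
  have hg' := ((hg.differentiable (by simp) _).hasFDerivAt.restrictScalars ℝ).comp x
    (realToComplex d).hasFDerivAt
  have hre : HasFDerivAt (fun x => (g (realToComplex d x)).re) _ x :=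
    Complex.reCLM.hasFDerivAt.comp x hg'
  rw [pderiv, hre.fderiv]
  simp [realToComplex_single, cpderiv]

theorem iterate_pderiv_re_comp (hg : ContDiff ℂ ⊤ g) (i : Fin d) (m : ℕ) :
    (pderiv d i)^[m] (fun x => (g (realToComplex d x)).re) =
      fun x => ((cpderiv i)^[m] g (realToComplex d x)).re := by
  induction m generalizing g with
  | zero => rfl
  | succ m ih =>
    rw [Function.iterate_succ_apply, Function.iterate_succ_apply, pderiv_re_comp hg i,
      ih (contDiff_cpderiv hg i)]

theorem foldr_pderiv_re_comp (hg : ContDiff ℂ ⊤ g) (α : Fin d → ℕ) (l : List (Fin d)) :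
    l.foldr (fun i h => (pderiv d i)^[α i] h) (fun x => (g (realToComplex d x)).re) =
      fun x => (cmultiDeriv l α g (realToComplex d x)).re := by
  induction l with
  | nil => rfl
  | cons i l ih =>
    rw [List.foldr_cons, ih, iterate_pderiv_re_comp (contDiff_cmultiDeriv hg l α)]
    rfl

theorem multiDeriv_re_comp (hg : ContDiff ℂ ⊤ g) (α : Fin d → ℕ) :
    multiDeriv d α (fun x => (g (realToComplex d x)).re) =
      fun x => (cmultiDeriv (List.finRange d) α g (realToComplex d x)).re :=
  foldr_pderiv_re_comp hg α _

end RealRestriction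

section Gaussian

variable {ι : Type*} [Fintype ι]

theorem norm_sq_sub_sq_le {w : ℂ} {x ρ ε : ℝ} (hw : ‖w - x‖ ≤ ρ) (hε : 0 < ε) :
    ‖w ^ 2 - (x : ℂ) ^ 2‖ ≤ ε * x ^ 2 + (1 + ε⁻¹) * ρ ^ 2 := by
  have hρ : 0 ≤ ρ := (norm_nonneg _).trans hw
  have hcross : 2 * |x| * ρ ≤ ε * x ^ 2 + ε⁻¹ * ρ ^ 2 := by
    simpa using two_mul_le_add_mul_sq (a := |x|) (b := ρ) hε
  calc ‖w ^ 2 - (x : ℂ) ^ 2‖ = ‖(w - x) ^ 2 + 2 * x * (w - x)‖ := by ring_nf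
    _ ≤ ρ ^ 2 + 2 * |x| * ρ := by
        refine (norm_add_le _ _).trans (add_le_add ?_ ?_)
        · rw [norm_pow]; gcongr
        · rw [norm_mul, norm_mul, Complex.norm_ofNat, Complex.norm_real, Real.norm_eq_abs]
          gcongr
    _ ≤ _ := by linarith

theorem norm_sum_sq_sub_sum_sq_le {w : ι → ℂ} {x : ι → ℝ} {ρ ε : ℝ}
    (hw : ∀ j, ‖w j - x j‖ ≤ ρ) (hε : 0 < ε) :
    ‖∑ j, w j ^ 2 - ((∑ j, x j ^ 2 : ℝ) : ℂ)‖ ≤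
      ε * ∑ j, x j ^ 2 + Fintype.card ι * (1 + ε⁻¹) * ρ ^ 2 := by
  push_cast
  rw [← Finset.sum_sub_distrib]
  calc _ ≤ ∑ j, (ε * x j ^ 2 + (1 + ε⁻¹) * ρ ^ 2) :=
        (norm_sum_le _ _).trans (Finset.sum_le_sum fun j _ => norm_sq_sub_sq_le (hw j) hε)
    _ = _ := by
        rw [Finset.sum_add_distrib, ← Finset.mul_sum, Finset.sum_const, Finset.card_univ,
          nsmul_eq_mul]
        ring

def cexpNegSumSqPow (ι : Type*) [Fintype ι] (k : ℕ) : (ι → ℂ) → ℂ :=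
  fun z => Complex.exp (-(∑ j, z j ^ 2) ^ k)

theorem contDiff_cexpNegSumSqPow (k : ℕ) : ContDiff ℂ ⊤ (cexpNegSumSqPow ι k) := by
  unfold cexpNegSumSqPow
  fun_prop

theorem norm_cexpNegSumSqPow_le {k : ℕ} (hk : 0 < k) (x : ι → ℝ) {ρ : ℝ}
    {w : ι → ℂ} (hw : ∀ j, ‖w j - x j‖ ≤ ρ) :
    ‖cexpNegSumSqPow ι k w‖ ≤
      Real.exp ((Fintype.card ι * (1 + 8 * k) ^ 2) ^ k * ρ ^ (2 * k)) *
        Real.exp (-(1 / 2) * (∑ j, x j ^ 2) ^ k) := by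
  -- `ε = 1 / (8k)` makes `(1 + ε) ^ (2k) ≤ 4 / 3`, which leaves `(2 / 3) u ^ k ≥ u ^ k / 2`.
  have hε : 0 < (8 * k : ℝ)⁻¹ := by positivity
  have hre := two_mul_pow_sub_add_pow_le_re_pow (u := ∑ j, x j ^ 2) (by positivity)
    (norm_sum_sq_sub_sum_sq_le hw hε) k
  rw [add_sub_cancel, inv_inv] at hre
  set u := ∑ j, x j ^ 2
  set c : ℝ := (Fintype.card ι : ℝ)
  have hsplit := add_pow_le_pow_add_pow (a := (1 + (8 * k : ℝ)⁻¹) * u)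
    (b := c * (1 + 8 * k) * ρ ^ 2) (by positivity) (by positivity) hε k
  rw [inv_inv] at hsplit
  have hsum : (u + ((8 * k : ℝ)⁻¹ * u + c * (1 + 8 * k) * ρ ^ 2)) ^ k ≤
      ((1 + (8 * k : ℝ)⁻¹) ^ 2) ^ k * u ^ k + (c * (1 + 8 * k) ^ 2) ^ k * ρ ^ (2 * k) := by
    calc _ = ((1 + (8 * k : ℝ)⁻¹) * u + c * (1 + 8 * k) * ρ ^ 2) ^ k := by ring
      _ ≤ _ := hsplit
      _ = _ := by rw [pow_mul, ← mul_pow, ← mul_pow]; ring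
  have hsmall := one_add_inv_sq_pow_le hk
  have huk : 0 ≤ u ^ k := by positivity
  rw [cexpNegSumSqPow, Complex.norm_exp, ← Real.exp_add, Complex.neg_re]
  gcongr
  nlinarith

end Gaussian

theorem prod_factorial_le_one_add_sum_pow {ι : Type*} (s : Finset ι) (α : ι → ℕ) :
    ∏ i ∈ s, (α i)! ≤ (1 + ∑ i ∈ s, α i) ^ ∑ i ∈ s, α i :=
  calc ∏ i ∈ s, (α i)! ≤ (∑ i ∈ s, α i)! :=
        Nat.le_of_dvd (factorial_pos _) (prod_factorial_dvd_factorial_sum s α)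
    _ ≤ (∑ i ∈ s, α i) ^ ∑ i ∈ s, α i := factorial_le_pow _
    _ ≤ _ := Nat.pow_le_pow_left (Nat.le_add_left _ _) _

theorem one_div_two_mul_eq_inv_natCast (k : ℕ) : (1 : ℝ) / (2 * k) = ((2 * k : ℕ) : ℝ)⁻¹ := by
  push_cast; exact one_div _

theorem div_pow_le_rpow_one_sub {P ρ : ℝ} {k n : ℕ} (hk : 0 < k) (hP : 0 < P) (hρ : 0 < ρ)
    (h : P ≤ (ρ ^ (2 * k)) ^ n) : P / ρ ^ n ≤ P ^ (1 - 1 / (2 * k : ℝ)) := by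
  have hroot : P ^ (1 / (2 * k : ℝ)) ≤ ρ ^ n := by
    calc P ^ (1 / (2 * k : ℝ)) ≤ ((ρ ^ n) ^ (2 * k)) ^ (((2 * k : ℕ) : ℝ)⁻¹) := by
          rw [one_div_two_mul_eq_inv_natCast, ← pow_mul, mul_comm n, pow_mul]
          gcongr
      _ = ρ ^ n := Real.pow_rpow_inv_natCast (by positivity) (by positivity)
  calc P / ρ ^ n = P ^ (1 - 1 / (2 * k : ℝ)) * (P ^ (1 / (2 * k : ℝ)) / ρ ^ n) := by
        rw [mul_div_assoc', ← Real.rpow_add hP, sub_add_cancel, Real.rpow_one]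
    _ ≤ P ^ (1 - 1 / (2 * k : ℝ)) * 1 := by
        gcongr
        exact div_le_one_of_le₀ hroot (by positivity)
    _ = _ := mul_one _

theorem norm_pow_eq_sum_sq_pow {d : ℕ} (ξ : Ed d) (k : ℕ) :
    ‖ξ‖ ^ (2 * k) = (∑ j, ξ j ^ 2) ^ k := by
  rw [pow_mul, EuclideanSpace.real_norm_sq_eq]

theorem exp_neg_norm_pow_eq_re (d k : ℕ) :
    (fun η : Ed d => Real.exp (-‖η‖ ^ (2 * k))) =
      fun η => (cexpNegSumSqPow (Fin d) k (realToComplex d η)).re := by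
  funext η
  rw [norm_pow_eq_sum_sq_pow, ← Complex.exp_ofReal_re]
  simp [cexpNegSumSqPow]

theorem abs_multiDeriv_exp_neg_norm_pow_le {d k : ℕ} (hk : 0 < k) (α : Fin d → ℕ) (ξ : Ed d)
    {ρ : ℝ} (hρ : 0 < ρ) :
    |multiDeriv d α (fun η : Ed d => Real.exp (-‖η‖ ^ (2 * k))) ξ| ≤
      (∏ i, (α i)! : ℕ) * (Real.exp ((d * (1 + 8 * k) ^ 2) ^ k * ρ ^ (2 * k)) *
        Real.exp (-(1 / 2) * ‖ξ‖ ^ (2 * k))) / ρ ^ (∑ i, α i) := by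
  rw [exp_neg_norm_pow_eq_re, multiDeriv_re_comp (contDiff_cexpNegSumSqPow k)]
  refine (Complex.abs_re_le_norm _).trans ?_
  have h := norm_cmultiDeriv_le (contDiff_cexpNegSumSqPow k) α hρ (List.nodup_finRange d)
    (realToComplex d ξ) fun w hw _ =>
      norm_cexpNegSumSqPow_le hk (fun j => ξ j) fun j => hw j (List.mem_finRange j)
  simpa [← List.ofFn_eq_map, List.prod_ofFn, List.sum_ofFn, norm_pow_eq_sum_sq_pow] using h

theorem statement18_general (d k : ℕ) (hk : 1 ≤ k) :
    ∃ C > (0 : ℝ), ∀ (α : Fin d → ℕ) (ξ : Ed d),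
      |multiDeriv d α (fun η : Ed d => Real.exp (-‖η‖ ^ (2 * k))) ξ| ≤
        C ^ ((∑ i, α i) + 1) *
          ((∏ i, Nat.factorial (α i) : ℕ) : ℝ) ^ ((1 : ℝ) - 1 / (2 * k)) *
          Real.exp (-(1 / 2) *
            max (‖ξ‖ - ((1 : ℝ) + (∑ i, α i : ℕ)) ^ ((1 : ℝ) / (2 * k))) 0 ^ (2 * k)) := by
  set K : ℝ := ((d : ℝ) * (1 + 8 * k) ^ 2) ^ k
  refine ⟨Real.exp K, Real.exp_pos K, fun α ξ => ?_⟩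
  set n := ∑ i, α i
  set P := ∏ i, (α i)!
  set ρ : ℝ := (1 + (n : ℝ)) ^ ((1 : ℝ) / (2 * k)) with hρ_def
  have hρ : 0 < ρ := by positivity
  have hρk : ρ ^ (2 * k) = 1 + n := by
    rw [hρ_def, one_div_two_mul_eq_inv_natCast,
      Real.rpow_inv_natCast_pow (by positivity) (by omega)]
  have hP : (P : ℝ) / ρ ^ n ≤ (P : ℝ) ^ (1 - 1 / (2 * k : ℝ)) :=
    div_pow_le_rpow_one_sub hk (by positivity) hρ
      (by rw [hρk]; exact_mod_cast prod_factorial_le_one_add_sum_pow _ α)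
  have htail : Real.exp (-(1 / 2) * ‖ξ‖ ^ (2 * k)) ≤
      Real.exp (-(1 / 2) * max (‖ξ‖ - ρ) 0 ^ (2 * k)) := by
    rw [neg_mul, neg_mul]
    gcongr
    exact max_le (by linarith) (norm_nonneg ξ)
  calc _ ≤ P * (Real.exp (K * ρ ^ (2 * k)) * Real.exp (-(1 / 2) * ‖ξ‖ ^ (2 * k))) / ρ ^ n :=
        abs_multiDeriv_exp_neg_norm_pow_le hk α ξ hρ
    _ = Real.exp K ^ (n + 1) * (P / ρ ^ n) * Real.exp (-(1 / 2) * ‖ξ‖ ^ (2 * k)) := by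
        rw [hρk, ← Real.exp_nat_mul, show ((n + 1 : ℕ) : ℝ) * K = K * (1 + n) by push_cast; ring]
        ring
    _ ≤ _ := by gcongr

/-- pointwise Gevrey-type bound from the Cauchy estimates: for
`f(ξ) = exp(-|ξ|^{2k})` there is `C > 0` such that for every multi-index `α` and `ξ ∈ ℝ^d`,
`|∂^α f(ξ)| ≤ C^{|α|+1} (α!)^{1-1/(2k)} exp(-(1/2)((|ξ| - R_α)₊)^{2k})` with
`R_α = (1+|α|)^{1/(2k)}`. -/
theorem statement18 (d k : ℕ) (hd : 1 ≤ d) (hk : 1 ≤ k) :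
    ∃ C > (0 : ℝ), ∀ (α : Fin d → ℕ) (ξ : Ed d),
      |multiDeriv d α (fun η : Ed d => Real.exp (-‖η‖ ^ (2 * k))) ξ| ≤
        C ^ ((∑ i, α i) + 1) *
          ((∏ i, Nat.factorial (α i) : ℕ) : ℝ) ^ ((1 : ℝ) - 1 / (2 * k)) *
          Real.exp (-(1 / 2) *
            max (‖ξ‖ - ((1 : ℝ) + (∑ i, α i : ℕ)) ^ ((1 : ℝ) / (2 * k))) 0 ^ (2 * k)) :=
  statement18_general d k hk

end
end
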